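/- Let φ be a continuous flow on a connected locally compact, locally connected metric space M, and let K be an isolated attractor with only internal explosions that is purely unstable (its basin equals its stabilization: A(K) = K̂). Then K is a global attractor (A(K) = M) and M is compact. -/

import Mathlib

open Set

variable {M : Type} [TopologicalSpace M]

/-- The image set `A · S = {φ(x,t) : x ∈ A, t ∈ S}` of a set of points and a set of
times under a flow. -/
def flowImage (φ : Flow ℝ M) (A : Set M) (S : Set ℝ) : Set M :=
  {y | ∃ x ∈ A, ∃ t ∈ S, φ t x = y}

/-- `U` is an open neighbourhood of `x` in `A`, i.e. a relatively open subset of `A`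
containing `x`. -/
def IsRelOpenNbhd (A : Set M) (x : M) (U : Set M) : Prop :=
  x ∈ U ∧ ∃ V : Set M, IsOpen V ∧ U = V ∩ A

/-- The positive prolongational limit set of `x` relative to `A`:
`J⁺(x, A) = ⋂_{U, t ≥ 0} closure (U · [t, ∞))`, `U` ranging over the open
neighbourhoods of `x` in `A`. -/
def jPlusRel (φ : Flow ℝ M) (A : Set M) (x : M) : Set M :=
  ⋂ (U : Set M) (_ : IsRelOpenNbhd A x U) (t : ℝ) (_ : 0 ≤ t),
    closure (flowImage φ U (Ici t))

/-- The positive prolongational limit set `J⁺(x) = J⁺(x, M)`. -/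
def jPlus (φ : Flow ℝ M) (x : M) : Set M := jPlusRel φ univ x

/-- The negative prolongational limit set of `x` relative to `A`:
`J⁻(x, A) = ⋂_{U, t ≥ 0} closure (U · (-∞, -t])`. -/
def jMinusRel (φ : Flow ℝ M) (A : Set M) (x : M) : Set M :=
  ⋂ (U : Set M) (_ : IsRelOpenNbhd A x U) (t : ℝ) (_ : 0 ≤ t),
    closure (flowImage φ U (Iic (-t)))

/-- The negative prolongational limit set `J⁻(x) = J⁻(x, M)`. -/
def jMinus (φ : Flow ℝ M) (x : M) : Set M := jMinusRel φ univ x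

/-- The omega limit set `ω(x) = ⋂_t closure (x · [t, ∞))`. -/
def omegaSet (φ : Flow ℝ M) (x : M) : Set M :=
  ⋂ t : ℝ, closure (flowImage φ {x} (Ici t))

/-- The alpha limit set `α(x) = ⋂_t closure (x · (-∞, t])`. -/
def alphaSet (φ : Flow ℝ M) (x : M) : Set M :=
  ⋂ t : ℝ, closure (flowImage φ {x} (Iic t))

/-- A set is invariant under the flow. -/
def FlowInvariant (φ : Flow ℝ M) (K : Set M) : Prop :=
  ∀ t : ℝ, ∀ x ∈ K, φ t x ∈ K

/-- The stable manifold `W^s(K) = {x : ∅ ≠ ω(x) ⊆ K}`; for an attractor this is its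
basin of attraction `𝒜(K)`. -/
def stableSet (φ : Flow ℝ M) (K : Set M) : Set M :=
  {x | (omegaSet φ x).Nonempty ∧ omegaSet φ x ⊆ K}

/-- The unstable manifold `W^u(K) = {x : ∅ ≠ α(x) ⊆ K}`. -/
def unstableSet (φ : Flow ℝ M) (K : Set M) : Set M :=
  {x | (alphaSet φ x).Nonempty ∧ alphaSet φ x ⊆ K}

/-- `K` is an isolated compact invariant set: it has a compact neighbourhood `N` in
which it is the maximal invariant set. -/
def IsIsolatedInvariant (φ : Flow ℝ M) (K : Set M) : Prop :=
  IsCompact K ∧ FlowInvariant φ K ∧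
    ∃ N : Set M, IsCompact N ∧ N ∈ nhdsSet K ∧ K = {x ∈ N | ∀ t : ℝ, φ t x ∈ N}

/-- `K` is an isolated attractor: an isolated compact invariant set whose stable
manifold is a neighbourhood of it. -/
def IsIsolatedAttractor (φ : Flow ℝ M) (K : Set M) : Prop :=
  IsIsolatedInvariant φ K ∧ stableSet φ K ∈ nhdsSet K

/-- The stabilization `K̂ = ⋃_{x ∈ K} J⁺(x)` of an attractor `K`, the smallest stable
attractor containing `K`. -/
def stabilization (φ : Flow ℝ M) (K : Set M) : Set M :=
  ⋃ x ∈ K, jPlus φ x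

/-- `K` has only internal explosions (no external explosions): every explosion point
of the basin of attraction lies in `K`. -/
def OnlyInternalExplosions (φ : Flow ℝ M) (K : Set M) : Prop :=
  ∀ x ∈ stableSet φ K \ K, jPlus φ x ⊆ K

/-!
The basin `𝒜(K)` is open, and it is closed because it equals `K̂`, which is closed by
compactness of `K`; as `M` is connected, `𝒜(K) = M`. For compactness, take a compact
neighbourhood `N` of `K`. Every point of `N` is attracted to `K`, hence re-enters `int N`, and by
compactness it does so within a uniform time `T`. Hence the closure of the forward orbit of `N`,
which contains `K̂ = M`, lies in the compact set `N · [0, T]`.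
-/

open Topology

section FlowLemmas

variable {φ : Flow ℝ M} {K N V : Set M} {x y : M}

lemma flowImage_mono {A B : Set M} {S : Set ℝ} (h : A ⊆ B) :
    flowImage φ A S ⊆ flowImage φ B S := by
  rintro _ ⟨z, hz, t, ht, rfl⟩
  exact ⟨z, h hz, t, ht, rfl⟩

lemma flowImage_eq_image (φ : Flow ℝ M) (A : Set M) (S : Set ℝ) :
    flowImage φ A S = (fun p : ℝ × M => φ p.1 p.2) '' (S ×ˢ A) := by
  ext y
  simp only [flowImage, mem_image, mem_prod, Prod.exists]
  grind

lemma IsCompact.flowImage {A : Set M} {S : Set ℝ} (hA : IsCompact A) (hS : IsCompact S) :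
    IsCompact (flowImage φ A S) := by
  rw [flowImage_eq_image]
  exact (hS.prod hA).image (φ.continuous continuous_fst continuous_snd)

lemma flowImage_singleton (φ : Flow ℝ M) (x : M) (S : Set ℝ) :
    flowImage φ {x} S = (fun t => φ t x) '' S := by
  ext y
  simp [flowImage]

lemma flowImage_singleton_flow (φ : Flow ℝ M) (t s : ℝ) (x : M) :
    flowImage φ {φ t x} (Ici s) = flowImage φ {x} (Ici (s + t)) := by
  simp only [flowImage_singleton, ← image_add_const_Ici, image_image, φ.map_add]

lemma omegaSet_flow (φ : Flow ℝ M) (t : ℝ) (x : M) :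
    omegaSet φ (φ t x) = omegaSet φ x := by
  simp only [omegaSet, flowImage_singleton_flow]
  exact (add_right_surjective t).iInter_comp fun s => closure (flowImage φ {x} (Ici s))

lemma flow_mem_stableSet_iff {t : ℝ} : φ t x ∈ stableSet φ K ↔ x ∈ stableSet φ K := by
  simp only [stableSet, mem_ofPred_eq, omegaSet_flow]

lemma exists_flow_mem_of_mem_omegaSet (hy : y ∈ omegaSet φ x) (hV : V ∈ 𝓝 y) (t₀ : ℝ) :
    ∃ s, t₀ ≤ s ∧ φ s x ∈ V := by
  obtain ⟨_, hsV, _, rfl, s, hs, rfl⟩ := mem_closure_iff_nhds.mp (mem_iInter.mp hy t₀) V hV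
  exact ⟨s, hs, hsV⟩

lemma mem_jPlus_iff : y ∈ jPlus φ x ↔
    ∀ U, IsOpen U → x ∈ U → ∀ t, 0 ≤ t → y ∈ closure (flowImage φ U (Ici t)) := by
  simp only [jPlus, jPlusRel, IsRelOpenNbhd, inter_univ, mem_iInter]
  refine ⟨fun h U hU hxU => h U ⟨hxU, U, hU, rfl⟩, ?_⟩
  rintro h U ⟨hxU, W, hW, rfl⟩
  exact h _ hW hxU

lemma jPlus_subset_closure_flowImage {U : Set M} (hU : U ∈ 𝓝 x) {t : ℝ} (ht : 0 ≤ t) :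
    jPlus φ x ⊆ closure (flowImage φ U (Ici t)) := by
  obtain ⟨W, hWU, hW, hxW⟩ := mem_nhds_iff.mp hU
  exact fun y hy => closure_mono (flowImage_mono hWU) (mem_jPlus_iff.mp hy W hW hxW t ht)

lemma stabilization_subset_closure_flowImage (hN : N ∈ 𝓝ˢ K) :
    stabilization φ K ⊆ closure (flowImage φ N (Ici 0)) :=
  iUnion₂_subset fun _ hx =>
    jPlus_subset_closure_flowImage (mem_nhdsSet_iff_forall.mp hN _ hx) le_rfl

lemma isOpen_stableSet (hK : stableSet φ K ∈ 𝓝ˢ K) : IsOpen (stableSet φ K) := by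
  refine isOpen_iff_mem_nhds.mpr fun x hx => ?_
  obtain ⟨⟨y, hy⟩, hωK⟩ := hx
  have hyK : interior (stableSet φ K) ∈ 𝓝 y :=
    isOpen_interior.mem_nhds (subset_interior_iff_mem_nhdsSet.mpr hK (hωK hy))
  obtain ⟨s, -, hs⟩ := exists_flow_mem_of_mem_omegaSet hy hyK 0
  have hcont : ContinuousAt (φ s) x := (φ.continuous_toFun s).continuousAt
  simpa only [preimage, flow_mem_stableSet_iff, ofPred_mem_eq] using
    hcont.preimage_mem_nhds (mem_interior_iff_mem_nhds.mp hs)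

lemma isClosed_stabilization (hK : IsCompact K) : IsClosed (stabilization φ K) := by
  refine isClosed_of_closure_subset fun y hy => ?_
  by_contra hyK
  have hsep : ∀ x ∈ K, ∃ U, IsOpen U ∧ x ∈ U ∧
      ∃ t, 0 ≤ t ∧ y ∉ closure (flowImage φ U (Ici t)) := by
    intro x hx
    have := fun h => hyK (mem_biUnion hx h)
    simpa [mem_jPlus_iff] using this
  choose! U hU hxU t ht hyU using hsep
  obtain ⟨F, hFK, hKF⟩ :=
    hK.elim_nhds_subcover U fun x hx => (hU x hx).mem_nhds (hxU x hx)
  have hcover : stabilization φ K ⊆ ⋃ x ∈ F, closure (flowImage φ (U x) (Ici (t x))) := by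
    refine iUnion₂_subset fun x hx => ?_
    obtain ⟨x₀, hx₀, hx⟩ := mem_iUnion₂.mp (hKF hx)
    exact (jPlus_subset_closure_flowImage ((hU x₀ (hFK x₀ hx₀)).mem_nhds hx)
      (ht x₀ (hFK x₀ hx₀))).trans fun z hz => mem_iUnion₂.mpr ⟨x₀, hx₀, hz⟩
  have hclosed : IsClosed (⋃ x ∈ F, closure (flowImage φ (U x) (Ici (t x)))) :=
    F.finite_toSet.isClosed_biUnion fun _ _ => isClosed_closure
  obtain ⟨x, hxF, hyx⟩ := mem_iUnion₂.mp (closure_minimal hcover hclosed hy)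
  exact hyU x (hFK x hxF) hyx

end FlowLemmas

section ForwardOrbits

variable {φ : Flow ℝ M} {K N V : Set M}

lemma IsCompact.exists_uniform_return_time (hN : IsCompact N) (hV : IsOpen V)
    (hret : ∀ w ∈ N, ∃ s, 0 < s ∧ φ s w ∈ V) :
    ∃ T, ∀ w ∈ N, ∃ u ∈ Ioc 0 T, φ u w ∈ V := by
  choose! s hs hsV using hret
  obtain ⟨F, hFN, hNF⟩ := hN.elim_nhds_subcover (fun w => φ (s w) ⁻¹' V)
    fun w hw => (hV.preimage (φ.continuous_toFun _)).mem_nhds (hsV w hw)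
  obtain ⟨T, hT⟩ := (F.finite_toSet.image s).bddAbove
  refine ⟨T, fun w hw => ?_⟩
  obtain ⟨w₀, hw₀, hw⟩ := mem_iUnion₂.mp (hNF hw)
  exact ⟨s w₀, ⟨hs w₀ (hFN w₀ hw₀), hT (mem_image_of_mem s hw₀)⟩, hw⟩

lemma flowImage_Ici_subset_flowImage_Icc (hN : IsClosed N) {T : ℝ}
    (hret : ∀ w ∈ N, ∃ u ∈ Ioc 0 T, φ u w ∈ N) :
    flowImage φ N (Ici 0) ⊆ flowImage φ N (Icc 0 T) := by
  rintro _ ⟨z, hz, t, ht, rfl⟩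
  -- `φ t z` is reached from the last visit of the orbit to `N` before time `t`.
  set S : Set ℝ := {u ∈ Icc 0 t | φ u z ∈ N}
  have hSclosed : IsClosed S :=
    isClosed_Icc.inter (hN.preimage (φ.continuous continuous_id continuous_const))
  have hSbdd : BddAbove S := ⟨t, fun u hu => hu.1.2⟩
  have hσ : sSup S ∈ S :=
    hSclosed.csSup_mem ⟨0, ⟨le_rfl, ht⟩, by rwa [φ.map_zero_apply]⟩ hSbdd
  obtain ⟨u, ⟨hu, huT⟩, huN⟩ := hret _ hσ.2
  have hlast : t - sSup S ≤ T := by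
    by_contra! hlt
    have hnext : sSup S + u ∈ S :=
      ⟨⟨by linarith [hσ.1.1], by linarith⟩, by rwa [add_comm, φ.map_add]⟩
    linarith [le_csSup hSbdd hnext]
  exact ⟨_, hσ.2, t - sSup S, ⟨by linarith [hσ.1.2], hlast⟩, by rw [← φ.map_add, sub_add_cancel]⟩

lemma isCompact_closure_flowImage_Ici [T2Space M] (hN : IsCompact N) (hKN : N ∈ 𝓝ˢ K)
    (hNs : N ⊆ stableSet φ K) : IsCompact (closure (flowImage φ N (Ici 0))) := by
  have hret : ∀ w ∈ N, ∃ s, 0 < s ∧ φ s w ∈ interior N := by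
    intro w hw
    obtain ⟨⟨y, hy⟩, hωK⟩ := hNs hw
    have hyN : interior N ∈ 𝓝 y :=
      isOpen_interior.mem_nhds (subset_interior_iff_mem_nhdsSet.mpr hKN (hωK hy))
    obtain ⟨s, hs, hsN⟩ := exists_flow_mem_of_mem_omegaSet hy hyN 1
    exact ⟨s, by linarith, hsN⟩
  obtain ⟨T, hT⟩ := hN.exists_uniform_return_time isOpen_interior hret
  have hC : IsCompact (flowImage φ N (Icc 0 T)) := hN.flowImage isCompact_Icc
  refine hC.of_isClosed_subset isClosed_closure (closure_minimal ?_ hC.isClosed)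
  refine flowImage_Ici_subset_flowImage_Icc hN.isClosed fun w hw => ?_
  obtain ⟨u, hu, huN⟩ := hT w hw
  exact ⟨u, hu, interior_subset huN⟩

end ForwardOrbits

theorem purely_unstable_is_global_general {M : Type} [MetricSpace M] [LocallyCompactSpace M]
    [ConnectedSpace M]
    (φ : Flow ℝ M) (K : Set M) (hne : K.Nonempty)
    (hK : IsIsolatedAttractor φ K)
    (hpure : stableSet φ K = stabilization φ K) :
    stableSet φ K = Set.univ ∧ CompactSpace M := by
  obtain ⟨⟨hKc, -, -⟩, hKs⟩ := hK
  have hglobal : stableSet φ K = univ :=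
    IsClopen.eq_univ ⟨hpure ▸ isClosed_stabilization hKc, isOpen_stableSet hKs⟩
      (hne.mono (subset_of_mem_nhdsSet hKs))
  refine ⟨hglobal, ?_⟩
  obtain ⟨N, hN, hKN⟩ := exists_compact_superset hKc
  have hNK : N ∈ 𝓝ˢ K := subset_interior_iff_mem_nhdsSet.mp hKN
  rw [← isCompact_univ_iff, ← hglobal, hpure]
  exact (isCompact_closure_flowImage_Ici hN hNK (hglobal ▸ subset_univ N)).of_isClosed_subset
    (isClosed_stabilization hKc) (stabilization_subset_closure_flowImage hNK)

/-- Let `φ` be a continuous flow on a connected, locally compact,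
locally connected metric space `M`, and let `K` be a nonempty isolated attractor with
only internal explosions which is purely unstable, i.e. its basin of attraction equals
its stabilization: `𝒜(K) = K̂`.  Then `K` is a global attractor (`𝒜(K) = M`) and `M`
is compact. -/
theorem purely_unstable_is_global {M : Type} [MetricSpace M] [LocallyCompactSpace M]
    [LocallyConnectedSpace M] [ConnectedSpace M]
    (φ : Flow ℝ M) (K : Set M) (hne : K.Nonempty)
    (hK : IsIsolatedAttractor φ K) (hint : OnlyInternalExplosions φ K)
    (hpure : stableSet φ K = stabilization φ K) :
    stableSet φ K = Set.univ ∧ CompactSpace M :=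
  purely_unstable_is_global_general φ K hne hK hpure
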